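/- Let G be a finite simple undirected graph on n vertices in which every vertex has degree at least 1, with random-walk matrix P, and let X be an n×n real diagonal matrix with X_{ii} ≥ 1 for all i (in particular any X ∈ K). Then the matrix Z = X − (X−I)P is invertible. -/

import Mathlib

open Matrix

/-- The random-walk matrix of a graph: `P i j = 1 / deg i` if `(i,j)` is an edge, else `0`. -/
noncomputable def rwMatrix {n : ℕ} (G : SimpleGraph (Fin n)) [DecidableRel G.Adj] :
    Matrix (Fin n) (Fin n) ℝ :=
  fun i j => if G.Adj i j then (1 : ℝ) / (G.degree i) else 0

/-!
`Z = D - (D - 1) P` is strictly diagonally dominant whenever `D ≥ 1` is diagonal and `P` is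
entrywise nonnegative with row sums at most `1`: in row `k` the diagonal entry exceeds the sum
of the moduli of the off-diagonal ones by `1 + (d k - 1) (1 - ∑ⱼ P k j) ≥ 1`. Gershgorin's
theorem then gives `det Z ≠ 0`. The random-walk matrix is such a `P`.
-/

namespace Matrix

variable {ι : Type*} [Fintype ι] [DecidableEq ι]

theorem diagonal_sub_mul_apply (d : ι → ℝ) (P : Matrix ι ι ℝ) (i j : ι) :
    (diagonal d - (diagonal d - 1) * P) i j = diagonal d i j - (d i - 1) * P i j := by
  rw [sub_apply, ← diagonal_one, diagonal_sub, diagonal_mul]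

theorem isUnit_diagonal_sub_mul_of_nonneg_of_sum_le_one (d : ι → ℝ) (hd : ∀ i, 1 ≤ d i)
    (P : Matrix ι ι ℝ) (hP : ∀ i j, 0 ≤ P i j) (hrow : ∀ i, ∑ j, P i j ≤ 1) :
    IsUnit (diagonal d - (diagonal d - 1) * P) := by
  have hZ := diagonal_sub_mul_apply d P
  set Z := diagonal d - (diagonal d - 1) * P
  refine (isUnit_iff_isUnit_det Z).mpr (isUnit_iff_ne_zero.mpr ?_)
  refine det_ne_zero_of_sum_row_lt_diag fun k => ?_
  have hdk := hd k
  have hZkk : Z k k = d k - (d k - 1) * P k k := by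
    rw [hZ, diagonal_apply_eq]
  have hoff : ∀ j ∈ Finset.univ.erase k, ‖Z k j‖ = (d k - 1) * P k j := fun j hj => by
    rw [hZ, diagonal_apply_ne _ (Finset.ne_of_mem_erase hj).symm, zero_sub,
      norm_neg, Real.norm_of_nonneg (mul_nonneg (by linarith) (hP k j))]
  have hrow_off : ∑ j ∈ Finset.univ.erase k, P k j ≤ 1 - P k k := by
    linarith [Finset.add_sum_erase Finset.univ (P k) (Finset.mem_univ k), hrow k]
  have hPkk : P k k ≤ 1 := by
    linarith [Finset.sum_nonneg fun j (_ : j ∈ Finset.univ.erase k) => hP k j]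
  calc ∑ j ∈ Finset.univ.erase k, ‖Z k j‖
      = (d k - 1) * ∑ j ∈ Finset.univ.erase k, P k j := by
        rw [Finset.sum_congr rfl hoff, Finset.mul_sum]
    _ ≤ (d k - 1) * (1 - P k k) := mul_le_mul_of_nonneg_left hrow_off (by linarith)
    _ < d k - (d k - 1) * P k k := by linarith
    _ = ‖Z k k‖ := by
        rw [hZkk, Real.norm_of_nonneg (by nlinarith)]

end Matrix

theorem rwMatrix_nonneg {n : ℕ} (G : SimpleGraph (Fin n)) [DecidableRel G.Adj] (i j : Fin n) :
    0 ≤ rwMatrix G i j := by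
  unfold rwMatrix
  positivity

theorem sum_rwMatrix_le_one {n : ℕ} (G : SimpleGraph (Fin n)) [DecidableRel G.Adj] (i : Fin n) :
    ∑ j, rwMatrix G i j ≤ 1 := by
  have hsum : ∑ j, rwMatrix G i j = G.degree i * (1 / G.degree i) := by
    simp only [rwMatrix]
    rw [← Finset.sum_filter, ← SimpleGraph.neighborFinset_eq_filter, Finset.sum_const,
      SimpleGraph.card_neighborFinset_eq_degree, nsmul_eq_mul]
  rw [hsum, mul_one_div]
  exact div_self_le_one _

theorem Zmat_invertible_general
    {n : ℕ} (G : SimpleGraph (Fin n)) [DecidableRel G.Adj]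
    (X : Matrix (Fin n) (Fin n) ℝ) (hX : X.IsDiag) (hX1 : ∀ i, 1 ≤ X i i) :
    IsUnit (X - (X - 1) * rwMatrix G) := by
  rw [← hX.diagonal_diag]
  exact isUnit_diagonal_sub_mul_of_nonneg_of_sum_le_one _ hX1 _ (rwMatrix_nonneg G)
    (sum_rwMatrix_le_one G)

theorem Zmat_invertible
    {n : ℕ} (G : SimpleGraph (Fin n)) [DecidableRel G.Adj]
    (hdeg : ∀ v, 0 < G.degree v)
    (X : Matrix (Fin n) (Fin n) ℝ) (hX : X.IsDiag) (hX1 : ∀ i, 1 ≤ X i i) :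
    IsUnit (X - (X - 1) * rwMatrix G) :=
  Zmat_invertible_general G X hX hX1
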